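/- Let A, B, C, D be additive abelian groups and f : A → B, g : B → C, h : C → D group homomorphisms such that the sequence A → B → C → D is exact at B (image of f equals kernel of g) and at C (image of g equals kernel of h), and assume that D is torsion-free. Let K and T be additive abelian groups and let e : K × B → T be a ℤ-bilinear pairing (additive in each variable). Let U be the subgroup of the group Hom(K, T) of additive homomorphisms from K to T given by the image of the homomorphism A → Hom(K, T), a ↦ (φ ↦ e(φ, f(a))). Then there exists a unique additive homomorphism η from the torsion subgroup of C to the quotient group Hom(K, T)/U such that for every b ∈ B whose image g(b) is a torsion element of C one has η(g(b)) = [φ ↦ e(φ, b)], the class in Hom(K, T)/U of the homomorphism φ ↦ e(φ, b). -/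
import Mathlib


/-- The torsion subgroup of an abelian group: the elements killed by some
nonzero integer. -/
def torsionSubgroup (C : Type*) [AddCommGroup C] : AddSubgroup C where
  carrier := {x | ∃ n : ℤ, n ≠ 0 ∧ n • x = 0}
  zero_mem' := ⟨1, one_ne_zero, smul_zero 1⟩
  add_mem' := by
    rintro a b ⟨m, hm, hma⟩ ⟨n, hn, hnb⟩
    refine ⟨m * n, mul_ne_zero hm hn, ?_⟩
    have h1 : (m * n) • a = 0 := by rw [mul_comm, mul_zsmul, hma, smul_zero]
    have h2 : (m * n) • b = 0 := by rw [mul_zsmul, hnb, smul_zero]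
    rw [smul_add, h1, h2, add_zero]
  neg_mem' := by
    rintro a ⟨n, hn, hna⟩
    exact ⟨n, hn, by rw [smul_neg, hna, neg_zero]⟩

/-- Given an exact sequence `A → B → C → D` of abelian groups with `D`
torsion-free, a biadditive pairing `e : K × B → T`, and `U ⊆ Hom(K, T)` the
image of `a ↦ (φ ↦ e(φ, f a))`, there is a unique homomorphism `η` from the
torsion subgroup of `C` to `Hom(K, T)/U` with `η (g b) = [φ ↦ e(φ, b)]`
whenever `g b` is torsion. -/
theorem universal_eta_well_defined {A B C D K T : Type*}
    [AddCommGroup A] [AddCommGroup B] [AddCommGroup C] [AddCommGroup D]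
    [AddCommGroup K] [AddCommGroup T]
    (f : A →+ B) (g : B →+ C) (h : C →+ D)
    (hexactB : f.range = g.ker) (hexactC : g.range = h.ker)
    (hD : ∀ d : D, (∃ n : ℤ, n ≠ 0 ∧ n • d = 0) → d = 0)
    (e : K →+ B →+ T) :
    ∃! η : torsionSubgroup C →+
        ((K →+ T) ⧸ ((AddMonoidHom.flip e).comp f).range),
      ∀ (b : B) (hb : g b ∈ torsionSubgroup C),
        η ⟨g b, hb⟩ = QuotientAddGroup.mk ((AddMonoidHom.flip e) b) := by
  classical
  set U := ((AddMonoidHom.flip e).comp f).range with hU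
  -- every torsion element of C lifts to B
  have hsurj : ∀ x : torsionSubgroup C, ∃ b : B, g b = (x : C) := by
    rintro ⟨x, n, hn, hnx⟩
    have hx : h x = 0 := by
      refine hD (h x) ⟨n, hn, ?_⟩
      rw [← map_zsmul, hnx, map_zero]
    have : x ∈ g.range := by rw [hexactC]; exact hx
    obtain ⟨b, hb⟩ := this
    exact ⟨b, hb⟩
  -- key: the class of e.flip b only depends on g b
  have key : ∀ b b' : B, g b = g b' →
      (QuotientAddGroup.mk ((AddMonoidHom.flip e) b) :
        (K →+ T) ⧸ U) = QuotientAddGroup.mk ((AddMonoidHom.flip e) b') := by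
    intro b b' hbb
    have hker : b' - b ∈ g.ker := by
      simp [AddMonoidHom.mem_ker, map_sub, hbb]
    rw [← hexactB] at hker
    obtain ⟨a, ha⟩ := hker
    rw [QuotientAddGroup.eq]
    refine ⟨a, ?_⟩
    simp only [AddMonoidHom.comp_apply, ha, map_sub]
    abel
  choose lift hlift using hsurj
  refine ⟨{ toFun := fun x => QuotientAddGroup.mk ((AddMonoidHom.flip e) (lift x))
            map_zero' := ?_
            map_add' := ?_ }, ?_, ?_⟩
  · have : g (lift 0) = g 0 := by rw [hlift]; simp
    show (QuotientAddGroup.mk ((AddMonoidHom.flip e) (lift 0)) : (K →+ T) ⧸ U) = 0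
    rw [key _ _ this]
    simp
  · intro x y
    have : g (lift (x + y)) = g (lift x + lift y) := by
      rw [map_add, hlift, hlift, hlift]; rfl
    show (QuotientAddGroup.mk ((AddMonoidHom.flip e) (lift (x + y))) : (K →+ T) ⧸ U) = _
    rw [key _ _ this, map_add]
    rfl
  · intro b hb
    have : g (lift ⟨g b, hb⟩) = g b := hlift _
    exact key _ _ this
  · intro η' hη'
    ext x
    have := hη' (lift x) (by rw [hlift]; exact x.2)
    simp only [AddMonoidHom.coe_mk, ZeroHom.coe_mk]
    rw [show (⟨g (lift x), _⟩ : torsionSubgroup C) = x from Subtype.ext (hlift x)] at this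
    rw [this]
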